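/- arXiv:1306.5354 — 5 statements merged into one kernel-verified Lean document; each statement's English description precedes it below -/
import Mathlib

section
/- With F_L^j defined as the min-max over j-dimensional subspaces of L of ‖(A−t)u‖/‖u‖, the map t ↦ t + F_L^j(t) is monotonically non-decreasing, and t ↦ t − F_L^j(t) is also monotonically non-decreasing. -/
/-! Moving `t` by `δ` changes `‖(A - t)u‖` by at most `|δ| ‖u‖`, uniformly in `u`, so every
admissible bound at `s` plus `|t - s|` is admissible at `t` for the same subspace. Hence
`F_L^j` is `1`-Lipschitz, and `t ± f t` is monotone for any `1`-Lipschitz `f`. -/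

open scoped InnerProductSpace

variable {H : Type*} [NormedAddCommGroup H] [InnerProductSpace ℂ H] [CompleteSpace H]

/-- `Fapp A L j t` : the `j`-th min-max value of `‖(A-t)u‖/‖u‖` over
`j`-dimensional subspaces of `L`. -/
noncomputable def Fapp (A : H →L[ℂ] H) (L : Submodule ℂ H) (j : ℕ) (t : ℝ) : ℝ :=
  sInf {r : ℝ | 0 ≤ r ∧ ∃ V : Submodule ℂ H, V ≤ L ∧ Module.finrank ℂ V = j ∧
    ∀ u ∈ V, ‖A u - (t : ℂ) • u‖ ≤ r * ‖u‖}

/-- `dd A j t` : the `j`-th min-max value of `‖(A-t)u‖/‖u‖` over all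
`j`-dimensional subspaces of the space. -/
noncomputable def dd (A : H →L[ℂ] H) (j : ℕ) (t : ℝ) : ℝ :=
  sInf {r : ℝ | 0 ≤ r ∧ ∃ V : Submodule ℂ H, Module.finrank ℂ V = j ∧
    ∀ u ∈ V, ‖A u - (t : ℂ) • u‖ ≤ r * ‖u‖}

/-- `tr 1_{[a,b]}(A) ≥ j` : there is a `j`-dimensional subspace on which the
quadratic form of `(A-a)(A-b)` is non-positive. -/
def countGeIcc (A : H →L[ℂ] H) (a b : ℝ) (j : ℕ) : Prop :=
  ∃ V : Submodule ℂ H, Module.finrank ℂ V = j ∧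
    ∀ u ∈ V, (inner ℂ (A u - (a : ℂ) • u) (A u - (b : ℂ) • u) : ℂ).re ≤ 0

/-- `tr 1_{(a,b]}(A) ≥ j`. -/
def countGeIoc (A : H →L[ℂ] H) (a b : ℝ) (j : ℕ) : Prop :=
  ∃ V : Submodule ℂ H, Module.finrank ℂ V = j ∧
    (∀ u ∈ V, (inner ℂ (A u - (a : ℂ) • u) (A u - (b : ℂ) • u) : ℂ).re ≤ 0) ∧
    V ⊓ LinearMap.ker ((A - (a : ℂ) • (1 : H →L[ℂ] H) : H →L[ℂ] H) : H →ₗ[ℂ] H) = ⊥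

/-- `tr 1_{[a,b)}(A) ≥ j`. -/
def countGeIco (A : H →L[ℂ] H) (a b : ℝ) (j : ℕ) : Prop :=
  ∃ V : Submodule ℂ H, Module.finrank ℂ V = j ∧
    (∀ u ∈ V, (inner ℂ (A u - (a : ℂ) • u) (A u - (b : ℂ) • u) : ℂ).re ≤ 0) ∧
    V ⊓ LinearMap.ker ((A - (b : ℂ) • (1 : H →L[ℂ] H) : H →L[ℂ] H) : H →ₗ[ℂ] H) = ⊥

/-- `nminus A j t` : the `j`-th spectral point of `A` to the left of `t`,
counting multiplicities, i.e. `sup {s < t : tr 1_{(s,t]}(A) ≥ j}`. -/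
noncomputable def nminus (A : H →L[ℂ] H) (j : ℕ) (t : ℝ) : ℝ :=
  sSup {s : ℝ | s < t ∧ countGeIoc A s t j}

/-- `nplus A j t` : the `j`-th spectral point of `A` to the right of `t`. -/
noncomputable def nplus (A : H →L[ℂ] H) (j : ℕ) (t : ℝ) : ℝ :=
  sInf {s : ℝ | t < s ∧ countGeIco A t s j}

/-- The real spectrum of `A`. -/
def specRe (A : H →L[ℂ] H) : Set ℝ := {x : ℝ | (x : ℂ) ∈ spectrum ℂ A}

theorem Submodule.exists_le_finrank_eq {R M : Type*} [Ring R] [Nontrivial R]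
    [StrongRankCondition R] [AddCommGroup M] [Module R M] {L : Submodule R M} {n : ℕ}
    (hn : n ≤ Module.finrank R L) :
    ∃ V ≤ L, Module.finrank R V = n := by
  obtain ⟨f, hf⟩ := exists_linearIndependent_of_le_finrank hn
  refine ⟨span R (Set.range (L.subtype ∘ f)), ?_, ?_⟩
  · rw [span_le, Set.range_comp]
    exact Set.image_subset_iff.2 fun x _ => x.2
  · rw [finrank_span_eq_card (hf.map' L.subtype L.ker_subtype), Fintype.card_fin]

theorem LipschitzWith.monotone_id_add {f : ℝ → ℝ} (hf : LipschitzWith 1 f) :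
    Monotone fun t => t + f t := by
  intro s t hst
  have := hf.le_add_mul s t
  rw [NNReal.coe_one, one_mul, Real.dist_eq, abs_of_nonpos (sub_nonpos.2 hst)] at this
  dsimp only
  linarith

theorem LipschitzWith.monotone_id_sub {f : ℝ → ℝ} (hf : LipschitzWith 1 f) :
    Monotone fun t => t - f t := by
  intro s t hst
  have := hf.le_add_mul t s
  rw [NNReal.coe_one, one_mul, Real.dist_eq, abs_of_nonneg (sub_nonneg.2 hst)] at this
  dsimp only
  linarith

theorem norm_sub_ofReal_smul_le {E : Type*} [NormedAddCommGroup E] [NormedSpace ℂ E]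
    (x u : E) (s t : ℝ) : ‖x - (t : ℂ) • u‖ ≤ ‖x - (s : ℂ) • u‖ + |t - s| * ‖u‖ :=
  calc ‖x - (t : ℂ) • u‖ ≤ ‖x - (s : ℂ) • u‖ + ‖(s : ℂ) • u - (t : ℂ) • u‖ :=
        norm_sub_le_norm_sub_add_norm_sub _ _ _
    _ = ‖x - (s : ℂ) • u‖ + |t - s| * ‖u‖ := by
        rw [← sub_smul, norm_smul, ← Complex.ofReal_sub, Complex.norm_real, Real.norm_eq_abs,
          abs_sub_comm]

section

variable {E : Type*} [NormedAddCommGroup E] [InnerProductSpace ℂ E]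

theorem Fapp_le_add_abs_sub (A : E →L[ℂ] E) {L : Submodule ℂ E} {j : ℕ}
    (hj : j ≤ Module.finrank ℂ L) (s t : ℝ) : Fapp A L j t ≤ Fapp A L j s + |t - s| := by
  obtain ⟨V, hVL, hVj⟩ := Submodule.exists_le_finrank_eq hj
  rw [Fapp, Fapp, ← sub_le_iff_le_add]
  -- Bounds at `s` must exist; otherwise `Fapp A L j s` is the junk value `sInf ∅ = 0`.
  refine le_csInf ⟨‖A‖ + |s|, by positivity, V, hVL, hVj, fun u _ => ?_⟩ ?_
  · calc ‖A u - (s : ℂ) • u‖ ≤ ‖A u - ((0 : ℝ) : ℂ) • u‖ + |s - 0| * ‖u‖ :=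
          norm_sub_ofReal_smul_le _ _ _ _
      _ ≤ (‖A‖ + |s|) * ‖u‖ := by
          rw [Complex.ofReal_zero, zero_smul, sub_zero, sub_zero, add_mul]
          gcongr
          exact A.le_opNorm u
  · rintro r ⟨hr, W, hWL, hWj, hW⟩
    refine sub_le_iff_le_add.2 (csInf_le ⟨0, fun _ h => h.1⟩ ⟨by positivity, W, hWL, hWj,
      fun u hu => ?_⟩)
    calc ‖A u - (t : ℂ) • u‖ ≤ ‖A u - (s : ℂ) • u‖ + |t - s| * ‖u‖ :=
          norm_sub_ofReal_smul_le _ _ _ _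
      _ ≤ (r + |t - s|) * ‖u‖ := by rw [add_mul]; gcongr; exact hW u hu

theorem lipschitzWith_one_Fapp (A : E →L[ℂ] E) {L : Submodule ℂ E} {j : ℕ}
    (hj : j ≤ Module.finrank ℂ L) : LipschitzWith 1 (Fapp A L j) :=
  LipschitzWith.of_le_add fun t s => by
    simpa only [Real.dist_eq] using Fapp_le_add_abs_sub A hj s t

end

theorem stmt_1_general (A : H →L[ℂ] H)
    (L : Submodule ℂ H)
    (j : ℕ) (hj : j ≤ Module.finrank ℂ L) :
    Monotone (fun t : ℝ => t + Fapp A L j t) ∧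
      Monotone (fun t : ℝ => t - Fapp A L j t) :=
  have hF := lipschitzWith_one_Fapp A hj
  ⟨hF.monotone_id_add, hF.monotone_id_sub⟩

/-- `t ↦ t + F_L^j(t)` and `t ↦ t - F_L^j(t)` are monotone
non-decreasing. -/
theorem stmt_1 (A : H →L[ℂ] H) (hA : IsSelfAdjoint A)
    (L : Submodule ℂ H) [FiniteDimensional ℂ L]
    (j : ℕ) (hj1 : 1 ≤ j) (hj : j ≤ Module.finrank ℂ L) :
    Monotone (fun t : ℝ => t + Fapp A L j t) ∧
      Monotone (fun t : ℝ => t - Fapp A L j t) :=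
  stmt_1_general A L j hj
end

section
/- Let t ∈ ℝ and let n_j^-(t) = sup{s < t : tr 1_{(s,t]}(A) ≥ j} be the j-th spectral point of A to the left of t counting multiplicity. If t^- < t and F_L^j(t^-) ≤ t − t^-, then t^- − F_L^j(t^-) ≤ n_j^-(t). -/
/-!
Write `F = F_L^j(t⁻)`. The infimum defining `F` is attained: `j`-dimensional subspaces of the
finite-dimensional `L` are spans of orthonormal `j`-frames, which form a compact set, and the
admissible bounds form a closed set. So some `j`-dimensional `V` satisfies `‖(A - t⁻)u‖ ≤ F‖u‖`.
If `s < t⁻ - F`, then `[t⁻ - F, t⁻ + F] ⊆ (s, t]`, hence on `V` the form of `(A - s)(A - t)` is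
non-positive and `A - s` is injective; thus `tr 1_{(s,t]}(A) ≥ j` and `s ≤ n_j^-(t)`.
-/

open scoped InnerProductSpace

variable {H : Type*} [NormedAddCommGroup H] [InnerProductSpace ℂ H] [CompleteSpace H]

open Module

section Frames

variable {𝕜 E F : Type*} [RCLike 𝕜] [NormedAddCommGroup E] [InnerProductSpace 𝕜 E]
  [NormedAddCommGroup F] [InnerProductSpace 𝕜 F]

theorem isCompact_setOf_orthonormal (ι : Type*) [Fintype ι] [FiniteDimensional 𝕜 F] :
    IsCompact {v : ι → F | Orthonormal 𝕜 v} := by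
  classical
  have := FiniteDimensional.proper 𝕜 F
  refine Metric.isCompact_of_isClosed_isBounded ?_ ?_
  · simp only [orthonormal_iff_ite, Set.ofPred_forall]
    exact isClosed_iInter fun i => isClosed_iInter fun k =>
      isClosed_eq (by fun_prop) continuous_const
  · refine (Metric.isBounded_closedBall (x := (0 : ι → F)) (r := 1)).subset fun v hv => ?_
    rw [Metric.mem_closedBall, dist_zero_right]
    exact (pi_norm_le_iff_of_nonneg zero_le_one).2 fun i => (hv.1 i).le

theorem exists_le_finrank_eq_forall_iff_exists_orthonormal (L : Submodule 𝕜 E)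
    [FiniteDimensional 𝕜 L] (j : ℕ) (P : E → Prop) :
    (∃ V : Submodule 𝕜 E, V ≤ L ∧ finrank 𝕜 V = j ∧ ∀ u ∈ V, P u) ↔
      ∃ v : Fin j → L, Orthonormal 𝕜 v ∧ ∀ c : Fin j → 𝕜, P (∑ i, c i • (v i : E)) := by
  constructor
  · rintro ⟨V, hVL, rfl, hP⟩
    have : FiniteDimensional 𝕜 V := Submodule.finiteDimensional_of_le hVL
    let b := stdOrthonormalBasis 𝕜 V
    refine ⟨fun i => ⟨b i, hVL (b i).2⟩, ?_, fun c => hP _ ?_⟩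
    · exact L.subtypeₗᵢ.orthonormal_comp_iff.mp (b.orthonormal.comp_linearIsometry V.subtypeₗᵢ)
    · exact V.sum_mem fun i _ => V.smul_mem _ (b i).2
  · rintro ⟨v, hv, hP⟩
    have hw := hv.comp_linearIsometry L.subtypeₗᵢ
    refine ⟨Submodule.span 𝕜 (Set.range (L.subtypeₗᵢ ∘ v)), ?_, ?_, fun u hu => ?_⟩
    · exact Submodule.span_le.2 (Set.range_subset_iff.2 fun i => (v i).2)
    · rw [finrank_span_eq_card hw.linearIndependent, Fintype.card_fin]
    · obtain ⟨c, rfl⟩ := (Submodule.mem_span_range_iff_exists_fun 𝕜).1 hu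
      exact hP c

theorem isClosed_setOf_exists_le_finrank_eq_forall_le (L : Submodule 𝕜 E)
    [FiniteDimensional 𝕜 L] (j : ℕ) {φ : E → ℝ} (hφ : Continuous φ) :
    IsClosed {r : ℝ | 0 ≤ r ∧ ∃ V : Submodule 𝕜 E, V ≤ L ∧ finrank 𝕜 V = j ∧
      ∀ u ∈ V, φ u ≤ r * ‖u‖} := by
  let K := {v : Fin j → L | Orthonormal 𝕜 v}
  have : CompactSpace K := isCompact_iff_compactSpace.1 (isCompact_setOf_orthonormal _)
  let C : Set (K × ℝ) := {p | ∀ c : Fin j → 𝕜,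
    φ (∑ i, c i • ((p.1 : Fin j → L) i : E)) ≤ p.2 * ‖∑ i, c i • ((p.1 : Fin j → L) i : E)‖}
  have hcoord : ∀ i, Continuous fun p : K × ℝ => ((p.1 : Fin j → L) i : E) := fun i =>
    continuous_subtype_val.comp
      ((continuous_apply i).comp (continuous_subtype_val.comp continuous_fst))
  have hC : IsClosed C := by
    simp only [C, Set.ofPred_forall]
    exact isClosed_iInter fun c => isClosed_le (by fun_prop) (by fun_prop)
  convert (isClosed_Ici (a := (0 : ℝ))).inter (isClosedMap_snd_of_compactSpace C hC) using 1
  ext r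
  simp only [exists_le_finrank_eq_forall_iff_exists_orthonormal, Set.mem_ofPred_eq,
    Set.mem_inter_iff, Set.mem_Ici, Set.mem_image, Prod.exists, exists_eq_right,
    Subtype.exists, exists_prop, C, K]

end Frames

section Vectors

variable {𝕜 E : Type*} [RCLike 𝕜] [NormedAddCommGroup E] [InnerProductSpace 𝕜 E]

theorem re_inner_sub_smul_sub_smul_nonpos {x u : E} {τ r s t : ℝ}
    (hr : ‖x - (τ : 𝕜) • u‖ ≤ r * ‖u‖) (hs : r ≤ τ - s) (ht : r ≤ t - τ) :
    RCLike.re (inner 𝕜 (x - (s : 𝕜) • u) (x - (t : 𝕜) • u)) ≤ 0 := by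
  have hsum : (x - (s : 𝕜) • u) + (x - (t : 𝕜) • u) =
      (2 : 𝕜) • (x - (τ : 𝕜) • u) + ((2 * τ - s - t : ℝ) : 𝕜) • u := by
    push_cast; module
  have hdiff : (x - (s : 𝕜) • u) - (x - (t : 𝕜) • u) = ((t - s : ℝ) : 𝕜) • u := by
    push_cast; module
  -- by polarization, `re ⟪a, b⟫ ≤ 0` as soon as `‖a + b‖ ≤ ‖a - b‖`
  have key : ‖(x - (s : 𝕜) • u) + (x - (t : 𝕜) • u)‖ ≤
      ‖(x - (s : 𝕜) • u) - (x - (t : 𝕜) • u)‖ := by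
    rw [hsum, hdiff]
    calc _ ≤ ‖(2 : 𝕜) • (x - (τ : 𝕜) • u)‖ + ‖((2 * τ - s - t : ℝ) : 𝕜) • u‖ := norm_add_le _ _
      _ = 2 * ‖x - (τ : 𝕜) • u‖ + |2 * τ - s - t| * ‖u‖ := by
        rw [norm_smul, norm_smul, RCLike.norm_ofReal, RCLike.norm_two]
      _ ≤ (2 * r + |2 * τ - s - t|) * ‖u‖ := by linarith
      _ ≤ |t - s| * ‖u‖ := by
        gcongr
        have : |2 * τ - s - t| ≤ t - s - 2 * r := abs_le.2 ⟨by linarith, by linarith⟩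
        linarith [le_abs_self (t - s)]
      _ = ‖((t - s : ℝ) : 𝕜) • u‖ := by rw [norm_smul, RCLike.norm_ofReal]
  rw [re_inner_eq_norm_add_mul_self_sub_norm_sub_mul_self_div_four]
  nlinarith [mul_self_le_mul_self (norm_nonneg _) key]

theorem eq_zero_of_norm_sub_smul_le_of_eq_smul {x u : E} {τ r s : ℝ}
    (hr : ‖x - (τ : 𝕜) • u‖ ≤ r * ‖u‖) (hx : x = (s : 𝕜) • u) (hs : r < τ - s) : u = 0 := by
  subst hx
  rw [← sub_smul, ← RCLike.ofReal_sub, norm_smul, RCLike.norm_ofReal, abs_sub_comm] at hr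
  exact norm_le_zero_iff.1 (by nlinarith [le_abs_self (τ - s), norm_nonneg u])

end Vectors

section Spectral

variable {E : Type*} [NormedAddCommGroup E] [InnerProductSpace ℂ E]

theorem countGeIoc_of_forall_norm_sub_smul_le {A : E →L[ℂ] E} {V : Submodule ℂ E} {j : ℕ}
    (hV : finrank ℂ V = j) {τ r s t : ℝ} (hA : ∀ u ∈ V, ‖A u - (τ : ℂ) • u‖ ≤ r * ‖u‖)
    (hs : r < τ - s) (ht : r ≤ t - τ) : countGeIoc A s t j := by
  refine ⟨V, hV, fun u hu => re_inner_sub_smul_sub_smul_nonpos (hA u hu) hs.le ht, ?_⟩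
  rw [Submodule.eq_bot_iff]
  rintro u ⟨huV, huK⟩
  exact eq_zero_of_norm_sub_smul_le_of_eq_smul (hA u huV) (by simpa [sub_eq_zero] using huK) hs

theorem Fapp_nonneg (A : E →L[ℂ] E) (L : Submodule ℂ E) (j : ℕ) (t : ℝ) : 0 ≤ Fapp A L j t :=
  Real.sInf_nonneg fun _ hr => hr.1

theorem exists_le_finrank_eq_forall_norm_sub_smul_le_Fapp (A : E →L[ℂ] E) (L : Submodule ℂ E)
    [FiniteDimensional ℂ L] {j : ℕ} (hj : j ≤ finrank ℂ L) (t : ℝ) :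
    ∃ V : Submodule ℂ E, V ≤ L ∧ finrank ℂ V = j ∧
      ∀ u ∈ V, ‖A u - (t : ℂ) • u‖ ≤ Fapp A L j t * ‖u‖ := by
  have hclosed := isClosed_setOf_exists_le_finrank_eq_forall_le L j
    (φ := fun u => ‖A u - (t : ℂ) • u‖) (by fun_prop)
  let b := stdOrthonormalBasis ℂ L
  have hne : ∃ V : Submodule ℂ E, V ≤ L ∧ finrank ℂ V = j ∧
      ∀ u ∈ V, ‖A u - (t : ℂ) • u‖ ≤ ‖A - (t : ℂ) • 1‖ * ‖u‖ :=
    (exists_le_finrank_eq_forall_iff_exists_orthonormal L j _).2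
      ⟨fun i => b (Fin.castLE hj i), b.orthonormal.comp _ (Fin.castLE_injective hj),
        fun c => (A - (t : ℂ) • 1).le_opNorm _⟩
  exact (hclosed.csInf_mem ⟨_, norm_nonneg _, hne⟩ ⟨0, fun _ hr => hr.1⟩).2

end Spectral

theorem stmt_3_general (A : H →L[ℂ] H)
    (L : Submodule ℂ H) [FiniteDimensional ℂ L]
    (j : ℕ) (hj : j ≤ Module.finrank ℂ L)
    (t tm : ℝ) (hF : Fapp A L j tm ≤ t - tm) :
    tm - Fapp A L j tm ≤ nminus A j t := by
  obtain ⟨V, -, hVj, hV⟩ := exists_le_finrank_eq_forall_norm_sub_smul_le_Fapp A L hj tm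
  have hF0 := Fapp_nonneg A L j tm
  refine le_of_forall_lt_imp_le_of_dense fun s hs => le_csSup ⟨t, fun _ h => h.1.le⟩ ?_
  exact ⟨by linarith, countGeIoc_of_forall_norm_sub_smul_le hVj hV (by linarith) hF⟩

/-- if `t⁻ < t` and `F_L^j(t⁻) ≤ t - t⁻` then
`t⁻ - F_L^j(t⁻) ≤ n_j^-(t)`. -/
theorem stmt_3 (A : H →L[ℂ] H) (hA : IsSelfAdjoint A)
    (L : Submodule ℂ H) [FiniteDimensional ℂ L]
    (j : ℕ) (hj1 : 1 ≤ j) (hj : j ≤ Module.finrank ℂ L)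
    (t tm : ℝ) (htm : tm < t) (hF : Fapp A L j tm ≤ t - tm) :
    tm - Fapp A L j tm ≤ nminus A j t :=
  stmt_3_general A L j hj t tm hF
end

section
/- The smallest eigenvalue τ_1^-(t) of the problem τ q_t(u,v) = l_t(u,v) on L is negative if and only if there exists s < t with F_L^1(s) = t − s; in that case s = t + 1/(2τ_1^-(t)) and F_L^1(s) = −1/(2τ_1^-(t)) = ‖(A−s)u‖/‖u‖ where u is the eigenvector corresponding to τ_1^-(t). -/
open scoped InnerProductSpace

variable {H : Type*} [NormedAddCommGroup H] [InnerProductSpace ℂ H] [CompleteSpace H]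

/-!
Write `q(u) = ‖(A - t)u‖²` and `l(u) = Re ⟪(A - t)u, u⟫`. Minimising the Rayleigh quotient `l/q`
over the unit sphere of `L` (where `q > 0`) produces an eigenvector of the pencil, because a
nonnegative Hermitian form vanishing at a point has that point in its radical; hence
`τ₁ q ≤ l` on `L`, with equality at `u₁`. Together with
`‖(A - s)u‖² - (t - s)²‖u‖² = q(u) + 2 (t - s) l(u)` this gives, for `s < t`,
`‖(A - s)u‖² - (t - s)²‖u‖² ≥ (1 + 2 (t - s) τ₁) q(u)` on `L`, with equality at `u₁`.
As `F_L^1(s)` is attained on `L`, `F_L^1(s) = t - s` holds exactly when `1 + 2 (t - s) τ₁ = 0`,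
i.e. `τ₁ < 0` and `s = t + 1/(2τ₁)`.
-/

open RCLike ComplexConjugate

section General

variable {𝕜 E : Type*} [RCLike 𝕜] [NormedAddCommGroup E] [InnerProductSpace 𝕜 E]

theorem Submodule.exists_forall_le_of_smul_invariant {S : Submodule 𝕜 E} [FiniteDimensional 𝕜 S]
    (hS : S ≠ ⊥) {f : E → ℝ} (hf : ContinuousOn f ((S : Set E) \ {0}))
    (hsmul : ∀ u, ∀ r : ℝ, 0 < r → f ((r : 𝕜) • u) = f u) :
    ∃ x ∈ S, x ≠ 0 ∧ ∀ u ∈ S, u ≠ 0 → f x ≤ f u := by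
  have : Nontrivial S := Submodule.nontrivial_iff_ne_bot.mpr hS
  have := FiniteDimensional.proper_rclike 𝕜 S
  have hfS : ContinuousOn (fun x : S => f x) (Metric.sphere 0 1) :=
    hf.comp continuous_subtype_val.continuousOn fun x hx =>
      ⟨x.2, by simpa using ne_zero_of_mem_unit_sphere ⟨x, hx⟩⟩
  obtain ⟨x, hx, hmin⟩ := (isCompact_sphere (0 : S) 1).exists_isMinOn
    ⟨_, (NormedSpace.sphere_nonempty_rclike 𝕜 zero_le_one).some.2⟩ hfS
  refine ⟨x, x.2, by simpa using ne_zero_of_mem_unit_sphere ⟨x, hx⟩, fun u hu hu0 => ?_⟩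
  have hunit : ((‖u‖⁻¹ : ℝ) : 𝕜) • (⟨u, hu⟩ : S) ∈ Metric.sphere (0 : S) 1 := by
    simpa using norm_smul_inv_norm (𝕜 := 𝕜) (x := (⟨u, hu⟩ : S)) (by simpa using hu0)
  have : f x ≤ f ↑(((‖u‖⁻¹ : ℝ) : 𝕜) • (⟨u, hu⟩ : S)) := hmin hunit
  rwa [Submodule.coe_smul, hsmul u _ (inv_pos.mpr (norm_pos_iff.mpr hu0))] at this

theorem LinearMap.IsSymmetric.re_inner_map_add_smul {C : E →ₗ[𝕜] E} (hC : C.IsSymmetric)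
    (x y : E) (ε : ℝ) :
    re ⟪C (x + (ε : 𝕜) • y), x + (ε : 𝕜) • y⟫_𝕜 =
      re ⟪C y, y⟫_𝕜 * (ε * ε) + 2 * re ⟪C x, y⟫_𝕜 * ε + re ⟪C x, x⟫_𝕜 := by
  have hyx : ⟪C y, x⟫_𝕜 = conj ⟪C x, y⟫_𝕜 := by rw [hC, inner_conj_symm]
  simp only [map_add, map_smul, inner_add_left, inner_add_right, inner_smul_left,
    inner_smul_right, hyx, conj_ofReal, re_ofReal_mul, conj_re]
  ring

theorem LinearMap.IsSymmetric.inner_map_eq_zero_of_re_inner_nonneg {C : E →ₗ[𝕜] E}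
    (hC : C.IsSymmetric) {S : Submodule 𝕜 E} (hS : ∀ u ∈ S, 0 ≤ re ⟪C u, u⟫_𝕜) {x : E}
    (hx : x ∈ S) (hx0 : re ⟪C x, x⟫_𝕜 = 0) {v : E} (hv : v ∈ S) : ⟪C x, v⟫_𝕜 = 0 := by
  -- along `x + ε y` the linear term is `2 ε ‖⟪C x, v⟫‖²`, which nonnegativity forces to vanish
  set y := conj ⟪C x, v⟫_𝕜 • v
  have hxy : re ⟪C x, y⟫_𝕜 = ‖⟪C x, v⟫_𝕜‖ ^ 2 := by
    rw [inner_smul_right, RCLike.conj_mul]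
    norm_cast
  have hdisc : discrim (re ⟪C y, y⟫_𝕜) (2 * re ⟪C x, y⟫_𝕜) 0 ≤ 0 :=
    discrim_le_zero fun ε : ℝ => by
      simpa only [hC.re_inner_map_add_smul, hx0, add_zero] using
        hS _ (S.add_mem hx (S.smul_mem (ε : 𝕜) (S.smul_mem _ hv)))
  rw [discrim, hxy, mul_zero, sub_zero] at hdisc
  simpa using le_antisymm hdisc (sq_nonneg _)

end General

section Pencil

variable {E : Type*} [NormedAddCommGroup E] [InnerProductSpace ℂ E]

theorem norm_sub_ofReal_smul_sq_sub (x u : E) (s t : ℝ) :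
    ‖x - (s : ℂ) • u‖ ^ 2 - (t - s) ^ 2 * ‖u‖ ^ 2 =
      ‖x - (t : ℂ) • u‖ ^ 2 + 2 * (t - s) * re ⟪x - (t : ℂ) • u, u⟫_ℂ := by
  have h : x - (s : ℂ) • u = (x - (t : ℂ) • u) + ((t - s : ℝ) : ℂ) • u := by
    rw [Complex.ofReal_sub, sub_smul]; abel
  rw [h, norm_add_sq (𝕜 := ℂ), inner_smul_right, norm_smul, Complex.norm_real, Real.norm_eq_abs,
    mul_pow, sq_abs, re_to_complex, re_to_complex, Complex.re_ofReal_mul]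
  ring

variable {A : E →L[ℂ] E} {L : Submodule ℂ E} {t : ℝ}

theorem norm_sub_smul_sq_pos_of_inf_ker_eq_bot
    (hker : L ⊓ LinearMap.ker ((A - (t : ℂ) • (1 : E →L[ℂ] E) : E →L[ℂ] E) : E →ₗ[ℂ] E) = ⊥)
    {u : E} (hu : u ∈ L) (hu0 : u ≠ 0) : 0 < ‖A u - (t : ℂ) • u‖ ^ 2 := by
  refine pow_pos (norm_pos_iff.mpr fun h => hu0 ?_) 2
  have : u ∈ L ⊓ LinearMap.ker ((A - (t : ℂ) • (1 : E →L[ℂ] E) : E →L[ℂ] E) : E →ₗ[ℂ] E) :=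
    ⟨hu, by simpa using h⟩
  rwa [hker, Submodule.mem_bot] at this

theorem exists_forall_mul_norm_sq_le_re_inner [FiniteDimensional ℂ L]
    (hker : L ⊓ LinearMap.ker ((A - (t : ℂ) • (1 : E →L[ℂ] E) : E →L[ℂ] E) : E →ₗ[ℂ] E) = ⊥)
    (hL : L ≠ ⊥) :
    ∃ x ∈ L, x ≠ 0 ∧ ∀ u ∈ L,
      re ⟪A x - (t : ℂ) • x, x⟫_ℂ / ‖A x - (t : ℂ) • x‖ ^ 2 * ‖A u - (t : ℂ) • u‖ ^ 2 ≤
        re ⟪A u - (t : ℂ) • u, u⟫_ℂ := by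
  obtain ⟨x, hxL, hx0, hx⟩ := L.exists_forall_le_of_smul_invariant hL
    (f := fun u => re ⟪A u - (t : ℂ) • u, u⟫_ℂ / ‖A u - (t : ℂ) • u‖ ^ 2)
    ((Continuous.continuousOn (by fun_prop)).div (Continuous.continuousOn (by fun_prop))
      fun u hu => (norm_sub_smul_sq_pos_of_inf_ker_eq_bot hker hu.1 hu.2).ne')
    (fun u r hr => by
      rw [map_smul, smul_comm (t : ℂ) _ u, ← smul_sub, inner_smul_left, inner_smul_right,
        conj_ofReal, ← mul_assoc, ← ofReal_mul, re_ofReal_mul, norm_smul, norm_ofReal, mul_pow,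
        sq_abs, ← pow_two]
      exact mul_div_mul_left _ _ (pow_ne_zero 2 hr.ne'))
  refine ⟨x, hxL, hx0, fun u hu => ?_⟩
  rcases eq_or_ne u 0 with rfl | hu0
  · simp
  · exact (le_div_iff₀ (norm_sub_smul_sq_pos_of_inf_ker_eq_bot hker hu hu0)).mp (hx u hu hu0)

theorem inner_sub_smul_eq_of_forall_mul_norm_sq_le (hA : (A : E →ₗ[ℂ] E).IsSymmetric) {m : ℝ}
    (hm : ∀ u ∈ L, m * ‖A u - (t : ℂ) • u‖ ^ 2 ≤ re ⟪A u - (t : ℂ) • u, u⟫_ℂ) {x : E}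
    (hx : x ∈ L) (hxm : re ⟪A x - (t : ℂ) • x, x⟫_ℂ = m * ‖A x - (t : ℂ) • x‖ ^ 2) {v : E}
    (hv : v ∈ L) :
    (m : ℂ) * ⟪A x - (t : ℂ) • x, A v - (t : ℂ) • v⟫_ℂ = ⟪A x - (t : ℂ) • x, v⟫_ℂ := by
  -- `l - m q` is the quadratic form of the symmetric operator `T - m T²`, where `T = A - t`
  set T : E →ₗ[ℂ] E := (A : E →ₗ[ℂ] E) - (t : ℂ) • LinearMap.id
  have hT : T.IsSymmetric := hA.sub (LinearMap.IsSymmetric.id.smul (conj_ofReal t))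
  have hC : (T - (m : ℂ) • T ^ 2).IsSymmetric := hT.sub ((hT.pow 2).smul (conj_ofReal m))
  have hCapp : ∀ u w, ⟪(T - (m : ℂ) • T ^ 2) u, w⟫_ℂ =
      ⟪A u - (t : ℂ) • u, w⟫_ℂ - m * ⟪A u - (t : ℂ) • u, A w - (t : ℂ) • w⟫_ℂ := fun u w => by
    rw [LinearMap.sub_apply, LinearMap.smul_apply, pow_two, Module.End.mul_apply, inner_sub_left,
      inner_smul_left, Complex.conj_ofReal, hT (T u) w]
    rfl
  have hCre : ∀ u, re ⟪(T - (m : ℂ) • T ^ 2) u, u⟫_ℂ =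
      re ⟪A u - (t : ℂ) • u, u⟫_ℂ - m * ‖A u - (t : ℂ) • u‖ ^ 2 := fun u => by
    rw [hCapp, map_sub, ← inner_self_eq_norm_sq (𝕜 := ℂ)]
    simp only [RCLike.re_to_complex, Complex.re_ofReal_mul]
  have := hC.inner_map_eq_zero_of_re_inner_nonneg (S := L)
    (fun u hu => by linarith [hCre u, hm u hu]) hx (by rw [hCre, hxm, sub_self]) hv
  rw [hCapp, sub_eq_zero] at this
  exact this.symm

theorem mul_norm_sq_le_re_inner_of_le_eigenvalues [FiniteDimensional ℂ L]
    (hA : (A : E →ₗ[ℂ] E).IsSymmetric)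
    (hker : L ⊓ LinearMap.ker ((A - (t : ℂ) • (1 : E →L[ℂ] E) : E →L[ℂ] E) : E →ₗ[ℂ] E) = ⊥)
    {τ1 : ℝ} (hmin : ∀ (τ : ℝ) (u : E), u ∈ L → u ≠ 0 →
      (∀ v ∈ L, (τ : ℂ) * ⟪A u - (t : ℂ) • u, A v - (t : ℂ) • v⟫_ℂ = ⟪A u - (t : ℂ) • u, v⟫_ℂ) →
        τ1 ≤ τ)
    {u : E} (hu : u ∈ L) : τ1 * ‖A u - (t : ℂ) • u‖ ^ 2 ≤ re ⟪A u - (t : ℂ) • u, u⟫_ℂ := by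
  rcases eq_or_ne L ⊥ with rfl | hL
  · simp [(Submodule.mem_bot ℂ).mp hu]
  obtain ⟨x, hxL, hx0, hx⟩ := exists_forall_mul_norm_sq_le_re_inner hker hL
  have hxm : re ⟪A x - (t : ℂ) • x, x⟫_ℂ =
      re ⟪A x - (t : ℂ) • x, x⟫_ℂ / ‖A x - (t : ℂ) • x‖ ^ 2 * ‖A x - (t : ℂ) • x‖ ^ 2 :=
    (div_mul_cancel₀ _ (norm_sub_smul_sq_pos_of_inf_ker_eq_bot hker hxL hx0).ne').symm
  calc τ1 * ‖A u - (t : ℂ) • u‖ ^ 2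
      ≤ re ⟪A x - (t : ℂ) • x, x⟫_ℂ / ‖A x - (t : ℂ) • x‖ ^ 2 * ‖A u - (t : ℂ) • u‖ ^ 2 :=
        mul_le_mul_of_nonneg_right
          (hmin _ x hxL hx0 fun v hv => inner_sub_smul_eq_of_forall_mul_norm_sq_le hA hx hxL hxm hv)
          (sq_nonneg _)
    _ ≤ re ⟪A u - (t : ℂ) • u, u⟫_ℂ := hx u hu

end Pencil

section Fapp

variable {E : Type*} [NormedAddCommGroup E] [InnerProductSpace ℂ E]

theorem norm_sub_smul_div_mem_Fapp_set (A : E →L[ℂ] E) {L : Submodule ℂ E} (s : ℝ) {u : E}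
    (hu : u ∈ L) (hu0 : u ≠ 0) :
    ‖A u - (s : ℂ) • u‖ / ‖u‖ ∈ {r : ℝ | 0 ≤ r ∧ ∃ V : Submodule ℂ E, V ≤ L ∧
      Module.finrank ℂ V = 1 ∧ ∀ w ∈ V, ‖A w - (s : ℂ) • w‖ ≤ r * ‖w‖} := by
  refine ⟨by positivity, ℂ ∙ u, (Submodule.span_singleton_le_iff_mem u L).mpr hu,
    finrank_span_singleton hu0, fun w hw => ?_⟩
  obtain ⟨c, rfl⟩ := Submodule.mem_span_singleton.mp hw
  rw [map_smul, smul_comm, ← smul_sub, norm_smul, norm_smul, div_mul_eq_mul_div, mul_comm,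
    mul_div_assoc, mul_div_assoc, div_self (norm_ne_zero_iff.mpr hu0), mul_one]

variable {A : E →L[ℂ] E} {L : Submodule ℂ E} {s : ℝ}

theorem Fapp_one_le_div {u : E} (hu : u ∈ L) (hu0 : u ≠ 0) :
    Fapp A L 1 s ≤ ‖A u - (s : ℂ) • u‖ / ‖u‖ :=
  csInf_le ⟨0, fun _ hr => hr.1⟩ (norm_sub_smul_div_mem_Fapp_set A s hu hu0)

theorem le_Fapp_one (hL : L ≠ ⊥) {c : ℝ} (hc : ∀ u ∈ L, c * ‖u‖ ≤ ‖A u - (s : ℂ) • u‖) :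
    c ≤ Fapp A L 1 s := by
  obtain ⟨u, hu, hu0⟩ := Submodule.exists_mem_ne_zero_of_ne_bot hL
  refine le_csInf ⟨_, norm_sub_smul_div_mem_Fapp_set A s hu hu0⟩ ?_
  rintro r ⟨-, V, hVL, hV, hr⟩
  obtain ⟨w, hw, hw0⟩ :=
    Submodule.exists_mem_ne_zero_of_ne_bot (p := V) (by rintro rfl; simp at hV)
  exact le_of_mul_le_mul_right ((hc w (hVL hw)).trans (hr w hw)) (norm_pos_iff.mpr hw0)

theorem exists_norm_sub_smul_eq_Fapp_one_mul [FiniteDimensional ℂ L] (hL : L ≠ ⊥) :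
    ∃ u ∈ L, u ≠ 0 ∧ ‖A u - (s : ℂ) • u‖ = Fapp A L 1 s * ‖u‖ := by
  obtain ⟨x, hxL, hx0, hx⟩ := L.exists_forall_le_of_smul_invariant hL
    (f := fun u => ‖A u - (s : ℂ) • u‖ / ‖u‖)
    ((Continuous.continuousOn (by fun_prop)).div (Continuous.continuousOn (by fun_prop))
      fun u hu => norm_ne_zero_iff.mpr hu.2)
    (fun u r hr => by
      rw [map_smul, smul_comm (s : ℂ) _ u, ← smul_sub, norm_smul, norm_smul]
      exact mul_div_mul_left _ _ (norm_ne_zero_iff.mpr (by simpa using hr.ne')))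
  refine ⟨x, hxL, hx0, ?_⟩
  have hFx : Fapp A L 1 s = ‖A x - (s : ℂ) • x‖ / ‖x‖ := by
    refine le_antisymm (Fapp_one_le_div hxL hx0) (le_Fapp_one hL fun u hu => ?_)
    rcases eq_or_ne u 0 with rfl | hu0
    · simp
    · exact (le_div_iff₀ (norm_pos_iff.mpr hu0)).mp (hx u hu hu0)
  rw [hFx, div_mul_cancel₀ _ (norm_ne_zero_iff.mpr hx0)]

variable {t τ1 : ℝ}

theorem norm_sub_smul_sq_sub_sq_of_eq {u : E}
    (hu : τ1 * ‖A u - (t : ℂ) • u‖ ^ 2 = re ⟪A u - (t : ℂ) • u, u⟫_ℂ) :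
    ‖A u - (s : ℂ) • u‖ ^ 2 - ((t - s) * ‖u‖) ^ 2 =
      (1 + 2 * (t - s) * τ1) * ‖A u - (t : ℂ) • u‖ ^ 2 := by
  rw [mul_pow, norm_sub_ofReal_smul_sq_sub, ← hu]
  ring

theorem norm_sub_smul_eq_of_eq_zero {u : E}
    (hu : τ1 * ‖A u - (t : ℂ) • u‖ ^ 2 = re ⟪A u - (t : ℂ) • u, u⟫_ℂ) (hst : s ≤ t)
    (hκ : 1 + 2 * (t - s) * τ1 = 0) : ‖A u - (s : ℂ) • u‖ = (t - s) * ‖u‖ := by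
  have h := norm_sub_smul_sq_sub_sq_of_eq (s := s) hu
  rw [hκ, zero_mul, sub_eq_zero] at h
  exact (pow_left_inj₀ (norm_nonneg _) (mul_nonneg (sub_nonneg.mpr hst) (norm_nonneg u))
    two_ne_zero).mp h

theorem Fapp_one_eq_sub_iff [FiniteDimensional ℂ L]
    (hker : L ⊓ LinearMap.ker ((A - (t : ℂ) • (1 : E →L[ℂ] E) : E →L[ℂ] E) : E →ₗ[ℂ] E) = ⊥)
    (hvar : ∀ u ∈ L, τ1 * ‖A u - (t : ℂ) • u‖ ^ 2 ≤ re ⟪A u - (t : ℂ) • u, u⟫_ℂ)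
    {u1 : E} (hu1L : u1 ∈ L) (hu1 : u1 ≠ 0)
    (heig1 : τ1 * ‖A u1 - (t : ℂ) • u1‖ ^ 2 = re ⟪A u1 - (t : ℂ) • u1, u1⟫_ℂ) (hst : s < t) :
    Fapp A L 1 s = t - s ↔ 1 + 2 * (t - s) * τ1 = 0 := by
  have hL : L ≠ ⊥ := (Submodule.ne_bot_iff L).mpr ⟨u1, hu1L, hu1⟩
  have hlow : ∀ u ∈ L, (1 + 2 * (t - s) * τ1) * ‖A u - (t : ℂ) • u‖ ^ 2 ≤
      ‖A u - (s : ℂ) • u‖ ^ 2 - ((t - s) * ‖u‖) ^ 2 := fun u hu => by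
    rw [mul_pow, norm_sub_ofReal_smul_sq_sub]
    nlinarith [mul_le_mul_of_nonneg_left (hvar u hu) (sub_nonneg.mpr hst.le)]
  constructor
  · intro hF
    obtain ⟨u, hu, hu0, hnorm⟩ := exists_norm_sub_smul_eq_Fapp_one_mul (A := A) (s := s) hL
    refine le_antisymm
      (nonpos_of_mul_nonpos_left ?_ (norm_sub_smul_sq_pos_of_inf_ker_eq_bot hker hu hu0))
      (nonneg_of_mul_nonneg_left ?_ (norm_sub_smul_sq_pos_of_inf_ker_eq_bot hker hu1L hu1))
    · simpa only [hnorm, hF, sub_self] using hlow u hu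
    · have h := Fapp_one_le_div (A := A) (s := s) hu1L hu1
      rw [hF, le_div_iff₀ (norm_pos_iff.mpr hu1)] at h
      rw [← norm_sub_smul_sq_sub_sq_of_eq heig1, sub_nonneg]
      exact pow_le_pow_left₀ (mul_nonneg (sub_nonneg.mpr hst.le) (norm_nonneg u1)) h 2
  · intro hκ
    refine le_antisymm ?_ (le_Fapp_one hL fun u hu => ?_)
    · have h := Fapp_one_le_div (A := A) (s := s) hu1L hu1
      rwa [norm_sub_smul_eq_of_eq_zero heig1 hst.le hκ, mul_div_assoc,
        div_self (norm_ne_zero_iff.mpr hu1), mul_one] at h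
    · have h := hlow u hu
      rw [hκ, zero_mul, sub_nonneg] at h
      exact (pow_le_pow_iff_left₀ (mul_nonneg (sub_nonneg.mpr hst.le) (norm_nonneg u))
        (norm_nonneg _) two_ne_zero).mp h

end Fapp

/-- the smallest eigenvalue `τ₁⁻(t)` of the weak problem
`τ q_t(u,v) = l_t(u,v)` on `L` is negative iff there is `s < t` with
`F_L^1(s) = t - s`; in that case `s = t + 1/(2τ₁⁻(t))` and
`F_L^1(s) = -1/(2τ₁⁻(t)) = ‖(A-s)u₁‖/‖u₁‖` for the corresponding
eigenvector `u₁`. -/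
theorem stmt_10 (A : H →L[ℂ] H) (hA : IsSelfAdjoint A)
    (L : Submodule ℂ H) [FiniteDimensional ℂ L] (t : ℝ)
    (hker : L ⊓ LinearMap.ker ((A - (t : ℂ) • (1 : H →L[ℂ] H) : H →L[ℂ] H) : H →ₗ[ℂ] H) = ⊥)
    (τ1 : ℝ) (u1 : H) (hu1L : u1 ∈ L) (hu1 : u1 ≠ 0)
    (heig : ∀ v ∈ L, (τ1 : ℂ) * (inner ℂ (A u1 - (t : ℂ) • u1) (A v - (t : ℂ) • v) : ℂ)
      = (inner ℂ (A u1 - (t : ℂ) • u1) v : ℂ))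
    (hmin : ∀ (τ : ℝ) (u : H), u ∈ L → u ≠ 0 →
      (∀ v ∈ L, (τ : ℂ) * (inner ℂ (A u - (t : ℂ) • u) (A v - (t : ℂ) • v) : ℂ)
        = (inner ℂ (A u - (t : ℂ) • u) v : ℂ)) → τ1 ≤ τ) :
    (τ1 < 0 ↔ ∃ s : ℝ, s < t ∧ Fapp A L 1 s = t - s) ∧
    (τ1 < 0 →
      (∀ s : ℝ, s < t → Fapp A L 1 s = t - s → s = t + 1 / (2 * τ1)) ∧
      Fapp A L 1 (t + 1 / (2 * τ1)) = -(1 / (2 * τ1)) ∧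
      ‖A u1 - ((t + 1 / (2 * τ1) : ℝ) : ℂ) • u1‖ = -(1 / (2 * τ1)) * ‖u1‖) := by
  have hvar : ∀ u ∈ L, τ1 * ‖A u - (t : ℂ) • u‖ ^ 2 ≤ re ⟪A u - (t : ℂ) • u, u⟫_ℂ :=
    fun u hu => mul_norm_sq_le_re_inner_of_le_eigenvalues hA.isSymmetric hker hmin hu
  have heig1 : τ1 * ‖A u1 - (t : ℂ) • u1‖ ^ 2 = re ⟪A u1 - (t : ℂ) • u1, u1⟫_ℂ := by
    have h := congrArg Complex.re (heig u1 hu1L)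
    rwa [Complex.re_ofReal_mul, ← re_to_complex, ← re_to_complex, inner_self_eq_norm_sq] at h
  have hiff : ∀ s < t, Fapp A L 1 s = t - s ↔ 1 + 2 * (t - s) * τ1 = 0 := fun s hs =>
    Fapp_one_eq_sub_iff hker hvar hu1L hu1 heig1 hs
  have hs₀ : τ1 < 0 → t + 1 / (2 * τ1) < t ∧ 1 + 2 * (t - (t + 1 / (2 * τ1))) * τ1 = 0 :=
    fun hτ => ⟨by linarith [one_div_neg.mpr (by linarith : 2 * τ1 < 0)],
      by field_simp [hτ.ne]; ring⟩
  refine ⟨⟨fun hτ => ⟨_, (hs₀ hτ).1, (hiff _ (hs₀ hτ).1).2 (hs₀ hτ).2⟩, ?_⟩,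
    fun hτ => ⟨fun s hs hF => ?_, ?_, ?_⟩⟩
  · rintro ⟨s, hs, hF⟩
    nlinarith [(hiff s hs).1 hF]
  · have hκ := (hiff s hs).1 hF
    field_simp [hτ.ne]
    linear_combination -hκ
  · rw [(hiff _ (hs₀ hτ).1).2 (hs₀ hτ).2]
    ring
  · rw [norm_sub_smul_eq_of_eq_zero heig1 (hs₀ hτ).1.le (hs₀ hτ).2]
    ring
end

section
/- Let {φ_j}_{j=1}^m be orthonormal in a Hilbert space and {w_j}_{j=1}^m vectors with ‖w_j − φ_j‖ ≤ ε_j and ε := (Σ ε_j²)^{1/2} < 1/√m. Then the Gram matrix G = [⟨w_k, w_l⟩] satisfies ‖G − I‖ ≤ √2 (2+ε) ε, G is invertible, and the Gram–Schmidt orthonormalized vectors v_j = Σ_k (G^{-1/2})_{kj} w_k satisfy ‖v_j − w_j‖ ≤ (2+ε)ε. -/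
open scoped ComplexOrder

/-- The square root of a positive semidefinite matrix, as `Matrix.PosSemidef.sqrt` was defined in
the older Mathlib (removed since). -/
noncomputable def Matrix.PosSemidef.sqrt {n 𝕜 : Type*} [Fintype n] [DecidableEq n] [RCLike 𝕜]
    {A : Matrix n n 𝕜} (hA : A.PosSemidef) : Matrix n n 𝕜 :=
  hA.1.eigenvectorUnitary.1 * Matrix.diagonal ((↑) ∘ Real.sqrt ∘ hA.1.eigenvalues) *
    (star hA.1.eigenvectorUnitary : Matrix n n 𝕜)

/-! Let `W, P : ℓ²(ι) → H` be the synthesis operators `x ↦ ∑ xᵢ wᵢ` and `x ↦ ∑ xᵢ φᵢ`, so that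
`⟪x, G y⟫ = ⟪W x, W y⟫` and `P` is an isometry. Cauchy–Schwarz gives `‖W - P‖ ≤ ε`; expanding
`⟪W x, W y⟫ - ⟪P x, P y⟫` then bounds `‖G - 1‖` by `(2 + ε) ε`, and `‖W x‖ ≥ (1 - ε) ‖x‖` makes
the `wᵢ` independent, so `G` is invertible. For `S = G^{1/2}` we have `‖W x‖ = ‖S x‖`, hence
`‖v_j - w_j‖ = ‖W (S⁻¹ - 1) e_j‖ = ‖(1 - S) e_j‖`, and since `S ≥ 0` gives `‖y‖ ≤ ‖(1 + S) y‖`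
while `(1 + S)(1 - S) = 1 - G`, this is at most `‖G - 1‖`. -/

open Matrix

namespace Matrix.PosSemidef

open scoped MatrixOrder

variable {n 𝕜 : Type*} [Fintype n] [DecidableEq n] [RCLike 𝕜] {A : Matrix n n 𝕜}

theorem sqrt_eq_cfcSqrt (hA : A.PosSemidef) : hA.sqrt = CFC.sqrt A := by
  rw [CFC.sqrt_eq_real_sqrt A hA.nonneg, cfcₙ_eq_cfc, hA.1.cfc_eq]
  rfl

theorem posSemidef_sqrt (hA : A.PosSemidef) : hA.sqrt.PosSemidef :=
  hA.sqrt_eq_cfcSqrt ▸ (CFC.sqrt_nonneg A).posSemidef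

theorem sqrt_mul_self (hA : A.PosSemidef) : hA.sqrt * hA.sqrt = A :=
  hA.sqrt_eq_cfcSqrt ▸ CFC.sqrt_mul_sqrt_self A hA.nonneg

end Matrix.PosSemidef

section Synthesis

variable {𝕜 E ι : Type*} [RCLike 𝕜] [NormedAddCommGroup E] [InnerProductSpace 𝕜 E]

theorem norm_le_norm_add_of_re_inner_nonneg {x y : E} (h : 0 ≤ RCLike.re (inner 𝕜 x y)) :
    ‖x‖ ≤ ‖x + y‖ := by
  refine le_of_pow_le_pow_left₀ two_ne_zero (norm_nonneg _) ?_
  rw [norm_add_sq (𝕜 := 𝕜)]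
  nlinarith [sq_nonneg ‖y‖]

theorem norm_inner_add_add_sub_inner_le (a b d e : E) :
    ‖inner 𝕜 (a + d) (b + e) - inner 𝕜 a b‖ ≤ ‖a‖ * ‖e‖ + ‖d‖ * ‖b‖ + ‖d‖ * ‖e‖ := by
  rw [inner_add_left, inner_add_right, inner_add_right, add_sub_right_comm, add_sub_cancel_left,
    add_assoc]
  refine (norm_add_le _ _).trans ?_
  gcongr
  · exact norm_inner_le_norm _ _
  exact (norm_add_le _ _).trans (add_le_add (norm_inner_le_norm _ _) (norm_inner_le_norm _ _))

theorem Orthonormal.gram_eq_one [DecidableEq ι] {φ : ι → E} (hφ : Orthonormal 𝕜 φ) :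
    gram 𝕜 φ = 1 := by
  ext i j
  simp [orthonormal_iff_ite.mp hφ, one_apply]

variable [Fintype ι]

variable (𝕜) in
noncomputable def synthesis (v : ι → E) : EuclideanSpace 𝕜 ι →ₗ[𝕜] E :=
  Fintype.linearCombination 𝕜 v ∘ₗ (WithLp.linearEquiv 2 𝕜 (ι → 𝕜)).toLinearMap

theorem synthesis_apply (v : ι → E) (x : EuclideanSpace 𝕜 ι) :
    synthesis 𝕜 v x = ∑ i, x i • v i := by
  simp [synthesis, Fintype.linearCombination_apply]

theorem synthesis_sub (v u : ι → E) (x : EuclideanSpace 𝕜 ι) :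
    synthesis 𝕜 (v - u) x = synthesis 𝕜 v x - synthesis 𝕜 u x := by
  simp only [synthesis_apply, Pi.sub_apply, smul_sub, Finset.sum_sub_distrib]

theorem inner_synthesis_synthesis [DecidableEq ι] (v : ι → E) (x y : EuclideanSpace 𝕜 ι) :
    inner 𝕜 (synthesis 𝕜 v x) (synthesis 𝕜 v y) =
      inner 𝕜 x (toEuclideanCLM (n := ι) (𝕜 := 𝕜) (gram 𝕜 v) y) := by
  rw [EuclideanSpace.inner_eq_star_dotProduct, ofLp_toEuclideanCLM, dotProduct_comm,
    star_dotProduct_gram_mulVec, synthesis_apply, synthesis_apply]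

theorem Orthonormal.norm_synthesis {φ : ι → E} (hφ : Orthonormal 𝕜 φ) (x : EuclideanSpace 𝕜 ι) :
    ‖synthesis 𝕜 φ x‖ = ‖x‖ := by
  classical
  rw [norm_eq_sqrt_re_inner (𝕜 := 𝕜), inner_synthesis_synthesis, hφ.gram_eq_one, map_one,
    one_apply_eq_self, ← norm_eq_sqrt_re_inner]

theorem norm_synthesis_le {d : ι → E} {c : ι → ℝ} (hd : ∀ i, ‖d i‖ ≤ c i)
    (x : EuclideanSpace 𝕜 ι) : ‖synthesis 𝕜 d x‖ ≤ √(∑ i, c i ^ 2) * ‖x‖ := by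
  rw [synthesis_apply, EuclideanSpace.norm_eq, mul_comm]
  calc ‖∑ i, x i • d i‖ ≤ ∑ i, ‖x i‖ * c i := by
        refine (norm_sum_le _ _).trans (Finset.sum_le_sum fun i _ => ?_)
        rw [norm_smul]
        exact mul_le_mul_of_nonneg_left (hd i) (norm_nonneg _)
    _ ≤ √(∑ i, ‖x i‖ ^ 2) * √(∑ i, c i ^ 2) := Real.sum_mul_le_sqrt_mul_sqrt _ _ _

variable {φ w : ι → E} {ε : ℝ}

theorem Orthonormal.linearIndependent_of_norm_synthesis_sub_le (hφ : Orthonormal 𝕜 φ)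
    (hD : ∀ x, ‖synthesis 𝕜 (w - φ) x‖ ≤ ε * ‖x‖) (hε : ε < 1) : LinearIndependent 𝕜 w := by
  rw [Fintype.linearIndependent_iff]
  intro g hg
  set x : EuclideanSpace 𝕜 ι := WithLp.toLp 2 g
  have hx : ‖x‖ ≤ ε * ‖x‖ :=
    calc ‖x‖ = ‖synthesis 𝕜 φ x‖ := (hφ.norm_synthesis x).symm
      _ = ‖synthesis 𝕜 (w - φ) x‖ := by
        rw [synthesis_sub, synthesis_apply w, norm_sub_rev, sub_eq_self.mpr hg]
      _ ≤ ε * ‖x‖ := hD x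
  have hx0 : x = 0 := norm_le_zero_iff.mp (by nlinarith [norm_nonneg x])
  exact fun i => congr_arg (· i) hx0

variable [DecidableEq ι]

theorem Orthonormal.norm_toEuclideanCLM_gram_sub_one_le (hφ : Orthonormal 𝕜 φ)
    (hD : ∀ x, ‖synthesis 𝕜 (w - φ) x‖ ≤ ε * ‖x‖) (hε : 0 ≤ ε) :
    ‖toEuclideanCLM (n := ι) (𝕜 := 𝕜) (gram 𝕜 w - 1)‖ ≤ (2 + ε) * ε := by
  refine ContinuousLinearMap.opNorm_le_of_re_inner_le (by positivity) fun x y hx hy => ?_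
  have hsplit : ∀ z, synthesis 𝕜 w z = synthesis 𝕜 φ z + synthesis 𝕜 (w - φ) z := fun z => by
    rw [synthesis_sub, add_sub_cancel]
  have hinner : inner 𝕜 y (toEuclideanCLM (n := ι) (𝕜 := 𝕜) (gram 𝕜 w - 1) x) =
      inner 𝕜 (synthesis 𝕜 w y) (synthesis 𝕜 w x) -
        inner 𝕜 (synthesis 𝕜 φ y) (synthesis 𝕜 φ x) := by
    rw [map_sub, _root_.sub_apply, inner_sub_right, inner_synthesis_synthesis,
      inner_synthesis_synthesis, hφ.gram_eq_one]
  calc RCLike.re (inner 𝕜 (toEuclideanCLM (n := ι) (𝕜 := 𝕜) (gram 𝕜 w - 1) x) y)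
      ≤ ‖inner 𝕜 y (toEuclideanCLM (n := ι) (𝕜 := 𝕜) (gram 𝕜 w - 1) x)‖ := by
        rw [inner_re_symm]; exact RCLike.re_le_norm _
    _ ≤ ‖y‖ * (ε * ‖x‖) + ε * ‖y‖ * ‖x‖ + ε * ‖y‖ * (ε * ‖x‖) := by
      rw [hinner, hsplit, hsplit]
      refine (norm_inner_add_add_sub_inner_le _ _ _ _).trans ?_
      rw [hφ.norm_synthesis, hφ.norm_synthesis]
      gcongr
      exacts [hD x, hD y, hD y, hD x]
    _ = (2 + ε) * ε := by rw [hx, hy]; ring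

theorem synthesis_toEuclideanCLM_single (v : ι → E) (A : Matrix ι ι 𝕜) (j : ι) :
    synthesis 𝕜 v (toEuclideanCLM (n := ι) (𝕜 := 𝕜) A (EuclideanSpace.single j 1)) =
      ∑ k, A k j • v k := by
  simp [synthesis_apply]

theorem norm_synthesis_eq_of_mul_self_eq_gram {v : ι → E} {S : Matrix ι ι 𝕜}
    (hS : S.IsHermitian) (hSS : S * S = gram 𝕜 v) (x : EuclideanSpace 𝕜 ι) :
    ‖synthesis 𝕜 v x‖ = ‖toEuclideanCLM (n := ι) (𝕜 := 𝕜) S x‖ := by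
  rw [norm_eq_sqrt_re_inner (𝕜 := 𝕜), inner_synthesis_synthesis, ← hSS, map_mul,
    mul_apply_eq_comp, norm_eq_sqrt_re_inner (𝕜 := 𝕜) (toEuclideanCLM (n := ι) (𝕜 := 𝕜) S x)]
  exact congr_arg (fun z => √(RCLike.re z)) (isSymmetric_toEuclideanLin_iff.mpr hS _ _).symm

theorem norm_toEuclideanCLM_one_sub_le {S : Matrix ι ι 𝕜} (hS : S.PosSemidef)
    (x : EuclideanSpace 𝕜 ι) :
    ‖toEuclideanCLM (n := ι) (𝕜 := 𝕜) (1 - S) x‖ ≤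
      ‖toEuclideanCLM (n := ι) (𝕜 := 𝕜) (1 - S * S) x‖ := by
  set y := toEuclideanCLM (n := ι) (𝕜 := 𝕜) (1 - S) x
  have hSy : 0 ≤ RCLike.re (inner 𝕜 y (toEuclideanCLM (n := ι) (𝕜 := 𝕜) S y)) :=
    (isPositive_toEuclideanLin_iff.mpr hS).re_inner_nonneg_right y
  have hfactor : (1 - S * S : Matrix ι ι 𝕜) = (1 + S) * (1 - S) := by noncomm_ring
  calc ‖y‖ ≤ ‖y + toEuclideanCLM (n := ι) (𝕜 := 𝕜) S y‖ :=
        norm_le_norm_add_of_re_inner_nonneg hSy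
    _ = _ := by rw [hfactor, map_mul, mul_apply_eq_comp, map_add, map_one, _root_.add_apply,
        one_apply_eq_self]

theorem norm_synthesis_toEuclideanCLM_inv_sub_one_le {v : ι → E} {S : Matrix ι ι 𝕜}
    (hS : S.PosSemidef) (hSS : S * S = gram 𝕜 v) (hG : IsUnit (gram 𝕜 v))
    (x : EuclideanSpace 𝕜 ι) :
    ‖synthesis 𝕜 v (toEuclideanCLM (n := ι) (𝕜 := 𝕜) (S⁻¹ - 1) x)‖ ≤
      ‖toEuclideanCLM (n := ι) (𝕜 := 𝕜) (gram 𝕜 v - 1)‖ * ‖x‖ := by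
  have hSdet : IsUnit S.det := (isUnit_iff_isUnit_det S).mp (isUnit_of_mul_isUnit_left (hSS ▸ hG))
  calc _ = ‖toEuclideanCLM (n := ι) (𝕜 := 𝕜) S (toEuclideanCLM (n := ι) (𝕜 := 𝕜) (S⁻¹ - 1) x)‖ :=
        norm_synthesis_eq_of_mul_self_eq_gram hS.1 hSS _
    _ = ‖toEuclideanCLM (n := ι) (𝕜 := 𝕜) (1 - S) x‖ := by
        rw [← mul_apply_eq_comp, ← map_mul, mul_sub, mul_nonsing_inv _ hSdet, mul_one]
    _ ≤ ‖toEuclideanCLM (n := ι) (𝕜 := 𝕜) (1 - S * S) x‖ := norm_toEuclideanCLM_one_sub_le hS x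
    _ = ‖toEuclideanCLM (n := ι) (𝕜 := 𝕜) (gram 𝕜 v - 1) x‖ := by
        rw [hSS, ← neg_sub, map_neg, _root_.neg_apply, norm_neg]
    _ ≤ _ := ContinuousLinearMap.le_opNorm _ _

end Synthesis

/-- Gram–Schmidt stability. If `{φ_j}` is orthonormal and
`‖w_j - φ_j‖ ≤ ε_j` with `ε = (Σ ε_j²)^{1/2} < 1/√m`, then the Gram matrix
`G = [⟨w_k, w_l⟩]` satisfies `‖G - I‖ ≤ √2 (2+ε) ε` (operator norm), `G` is
invertible, and the orthonormalized vectors `v_j = Σ_k (G^{-1/2})_{kj} w_k`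
satisfy `‖v_j - w_j‖ ≤ (2+ε) ε`. -/
theorem stmt_12 {H : Type*} [NormedAddCommGroup H] [InnerProductSpace ℂ H]
    (m : ℕ) (φ w : Fin m → H) (hφ : Orthonormal ℂ φ)
    (εv : Fin m → ℝ) (hw : ∀ j, ‖w j - φ j‖ ≤ εv j)
    (ε : ℝ) (hε : ε = Real.sqrt (∑ j, εv j ^ 2)) (hεm : ε < 1 / Real.sqrt m)
    (G : Matrix (Fin m) (Fin m) ℂ)
    (hGdef : G = Matrix.of fun k l => (inner ℂ (w k) (w l) : ℂ))
    (hG : G.PosSemidef)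
    (v : Fin m → H) (hv : ∀ j, v j = ∑ k, hG.sqrt⁻¹ k j • w k) :
    ‖Matrix.toEuclideanCLM (n := Fin m) (𝕜 := ℂ) (G - 1)‖ ≤
        Real.sqrt 2 * (2 + ε) * ε ∧
      IsUnit G ∧ ∀ j, ‖v j - w j‖ ≤ (2 + ε) * ε := by
  have hGw : G = gram ℂ w := hGdef
  subst hGw
  have hε0 : 0 ≤ ε := hε ▸ Real.sqrt_nonneg _
  have hε1 : ε < 1 := by
    refine hεm.trans_le ?_
    rcases m.eq_zero_or_pos with rfl | hm
    · simp
    · exact div_le_one_of_le₀ (Real.one_le_sqrt.mpr (by exact_mod_cast hm)) (Real.sqrt_nonneg _)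
  have hD (x : EuclideanSpace ℂ (Fin m)) : ‖synthesis ℂ (w - φ) x‖ ≤ ε * ‖x‖ :=
    hε ▸ norm_synthesis_le hw x
  have hnorm := hφ.norm_toEuclideanCLM_gram_sub_one_le hD hε0
  have hunit : IsUnit (gram ℂ w) :=
    (posDef_gram_of_linearIndependent (hφ.linearIndependent_of_norm_synthesis_sub_le hD hε1)).isUnit
  refine ⟨?_, hunit, fun j => ?_⟩
  · rw [mul_assoc]
    exact hnorm.trans (le_mul_of_one_le_left (by positivity) (Real.one_le_sqrt.mpr one_le_two))
  have hvw : v j - w j = synthesis ℂ w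
      (toEuclideanCLM (n := Fin m) (𝕜 := ℂ) (hG.sqrt⁻¹ - 1) (EuclideanSpace.single j 1)) := by
    rw [map_sub, _root_.sub_apply, map_sub, synthesis_toEuclideanCLM_single,
      synthesis_toEuclideanCLM_single, hv]
    simp [one_apply]
  calc ‖v j - w j‖ ≤ ‖toEuclideanCLM (n := Fin m) (𝕜 := ℂ) (gram ℂ w - 1)‖ *
        ‖EuclideanSpace.single j (1 : ℂ)‖ := hvw ▸
          norm_synthesis_toEuclideanCLM_inv_sub_one_le hG.posSemidef_sqrt hG.sqrt_mul_self hunit _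
    _ ≤ (2 + ε) * ε := by rwa [PiLp.norm_single, norm_one, mul_one]
end

section
/- Let {w_j}_{j=1}^m ⊂ L be orthonormal with ‖(A−t)(w_j − φ_j)‖ ≤ ε_j, where {φ_j}_{j=1}^m are orthonormal eigenvectors of |A−t| with |A−t|φ_j = 𝔡_j(t) φ_j. Then F_L^j(t) − 𝔡_j(t) ≤ (Σ_{k=1}^j ε_k²)^{1/2} for all j = 1,…,m. -/
/-!
Write `u ∈ span {w₀, …, w_j}` as `∑ cₖ wₖ` and compare it with `a = ∑ cₖ φₖ`. Since `A - t` is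
symmetric and `(A - t)² φₖ = 𝔡ₖ₊₁² φₖ`, the vectors `(A - t) φₖ` are orthogonal with norms
`𝔡ₖ₊₁ ≤ 𝔡ⱼ₊₁`, so `‖(A - t) a‖ ≤ 𝔡ⱼ₊₁ ‖u‖`; Cauchy–Schwarz gives
`‖(A - t)(u - a)‖ ≤ (∑ εₖ²)^{1/2} ‖u‖`. Hence the `(j+1)`-dimensional subspace `span {wₖ} ≤ L`
witnesses `F_L^{j+1}(t) ≤ 𝔡ⱼ₊₁(t) + (∑ εₖ²)^{1/2}`.
-/

open scoped InnerProductSpace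

variable {H : Type*} [NormedAddCommGroup H] [InnerProductSpace ℂ H] [CompleteSpace H]

section InnerProductSpace

variable {𝕜 E F : Type*} [RCLike 𝕜] [NormedAddCommGroup E] [InnerProductSpace 𝕜 E]
  [NormedAddCommGroup F] [InnerProductSpace 𝕜 F] {ι : Type*}

theorem norm_sum_sq_of_pairwise_inner_eq_zero {v : ι → E}
    (hv : Pairwise fun i l => ⟪v i, v l⟫_𝕜 = 0) (s : Finset ι) :
    ‖∑ i ∈ s, v i‖ ^ 2 = ∑ i ∈ s, ‖v i‖ ^ 2 := by
  classical
  induction s using Finset.induction_on with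
  | empty => simp
  | insert i s hi ih =>
    rw [Finset.sum_insert hi, Finset.sum_insert hi, ← ih, sq, sq, sq]
    refine norm_add_sq_eq_norm_sq_add_norm_sq_of_inner_eq_zero (𝕜 := 𝕜) (v i) _ ?_
    rw [inner_sum]
    exact Finset.sum_eq_zero fun l hl => hv (ne_of_mem_of_not_mem hl hi).symm

theorem norm_sum_smul_sq_of_pairwise_inner_eq_zero [Fintype ι] {v : ι → E}
    (hv : Pairwise fun i l => ⟪v i, v l⟫_𝕜 = 0) (c : ι → 𝕜) :
    ‖∑ i, c i • v i‖ ^ 2 = ∑ i, ‖c i‖ ^ 2 * ‖v i‖ ^ 2 := by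
  have hcv : Pairwise fun i l => ⟪c i • v i, c l • v l⟫_𝕜 = 0 := fun i l hil => by
    dsimp only
    rw [inner_smul_left, inner_smul_right, hv hil, mul_zero, mul_zero]
  simp only [norm_sum_sq_of_pairwise_inner_eq_zero hcv, norm_smul, mul_pow]

theorem Orthonormal.norm_sum_smul_sq [Fintype ι] {v : ι → E} (hv : Orthonormal 𝕜 v)
    (c : ι → 𝕜) : ‖∑ i, c i • v i‖ ^ 2 = ∑ i, ‖c i‖ ^ 2 := by
  simp [norm_sum_smul_sq_of_pairwise_inner_eq_zero (fun i l hil => hv.inner_eq_zero hil),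
    hv.norm_eq_one]

open Real in
theorem LinearMap.norm_apply_le_of_mem_span_perturbed [Fintype ι] (T : E →ₗ[𝕜] F)
    {w ψ : ι → E} (hw : Orthonormal 𝕜 w) (hψ : Pairwise fun i l => ⟪T (ψ i), T (ψ l)⟫_𝕜 = 0)
    {D : ℝ} (hD0 : 0 ≤ D) (hD : ∀ i, ‖T (ψ i)‖ ≤ D) {ε : ι → ℝ}
    (hε : ∀ i, ‖T (w i - ψ i)‖ ≤ ε i) {u : E} (hu : u ∈ Submodule.span 𝕜 (Set.range w)) :
    ‖T u‖ ≤ (D + √(∑ i, ε i ^ 2)) * ‖u‖ := by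
  obtain ⟨c, rfl⟩ := Submodule.mem_span_range_iff_exists_fun 𝕜 |>.mp hu
  have hu : ‖∑ i, c i • w i‖ = √(∑ i, ‖c i‖ ^ 2) := by
    rw [← hw.norm_sum_smul_sq, sqrt_sq (norm_nonneg _)]
  set a := ∑ i, c i • ψ i
  have hTa : ‖T a‖ ≤ D * ‖∑ i, c i • w i‖ :=
    calc ‖T a‖ = √(∑ i, ‖c i‖ ^ 2 * ‖T (ψ i)‖ ^ 2) := by
          simp only [a, map_sum, map_smul, ← norm_sum_smul_sq_of_pairwise_inner_eq_zero hψ,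
            sqrt_sq (norm_nonneg _)]
      _ ≤ √(D ^ 2 * ∑ i, ‖c i‖ ^ 2) := by
          rw [Finset.mul_sum]
          refine sqrt_le_sqrt (Finset.sum_le_sum fun i _ => ?_)
          rw [mul_comm]
          gcongr
          exact hD i
      _ = D * ‖∑ i, c i • w i‖ := by rw [sqrt_mul (sq_nonneg D), sqrt_sq hD0, hu]
  have hTrest : ‖T (∑ i, c i • w i - a)‖ ≤ √(∑ i, ε i ^ 2) * ‖∑ i, c i • w i‖ :=
    calc ‖T (∑ i, c i • w i - a)‖ = ‖∑ i, c i • T (w i - ψ i)‖ := by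
          simp only [a, ← Finset.sum_sub_distrib, ← smul_sub, map_sum, map_smul]
      _ ≤ ∑ i, ‖c i‖ * ε i := norm_sum_le_of_le _ fun i _ => by
          rw [norm_smul]
          exact mul_le_mul_of_nonneg_left (hε i) (norm_nonneg _)
      _ ≤ √(∑ i, ‖c i‖ ^ 2) * √(∑ i, ε i ^ 2) := sum_mul_le_sqrt_mul_sqrt _ _ _
      _ = √(∑ i, ε i ^ 2) * ‖∑ i, c i • w i‖ := by rw [hu, mul_comm]
  calc ‖T (∑ i, c i • w i)‖ = ‖T a + T (∑ i, c i • w i - a)‖ := by rw [← map_add, add_sub_cancel]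
    _ ≤ ‖T a‖ + ‖T (∑ i, c i • w i - a)‖ := norm_add_le _ _
    _ ≤ (D + √(∑ i, ε i ^ 2)) * ‖∑ i, c i • w i‖ := by linarith

theorem LinearMap.IsSymmetric.inner_apply_apply_of_apply_apply_eq_smul {T : E →ₗ[𝕜] E}
    (hT : T.IsSymmetric) (x : E) {y : E} {c : 𝕜} (hy : T (T y) = c • y) :
    ⟪T x, T y⟫_𝕜 = c * ⟪x, y⟫_𝕜 := by
  rw [hT x (T y), hy, inner_smul_right]

theorem LinearMap.IsSymmetric.norm_apply_of_apply_apply_eq_sq_smul {T : E →ₗ[𝕜] E}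
    (hT : T.IsSymmetric) {x : E} (hx : ‖x‖ = 1) {d : ℝ} (hd : 0 ≤ d)
    (h : T (T x) = ((d : 𝕜) ^ 2) • x) : ‖T x‖ = d := by
  have hsq := hT.inner_apply_apply_of_apply_apply_eq_smul x h
  rw [inner_self_eq_norm_sq_to_K, inner_self_eq_norm_sq_to_K, hx, RCLike.ofReal_one, one_pow,
    mul_one] at hsq
  exact (pow_left_inj₀ (norm_nonneg _) hd two_ne_zero).mp (mod_cast hsq)

end InnerProductSpace

section MinMax

variable {E : Type*} [NormedAddCommGroup E] [InnerProductSpace ℂ E]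

theorem dd_nonneg (A : E →L[ℂ] E) (j : ℕ) (t : ℝ) : 0 ≤ dd A j t :=
  Real.sInf_nonneg fun _ hr => hr.1

theorem dd_le_of_subspace {A : E →L[ℂ] E} {j : ℕ} {t r : ℝ} (hr : 0 ≤ r) {V : Submodule ℂ E}
    (hV : Module.finrank ℂ V = j) (hb : ∀ u ∈ V, ‖A u - (t : ℂ) • u‖ ≤ r * ‖u‖) :
    dd A j t ≤ r :=
  csInf_le ⟨0, fun _ hx => hx.1⟩ ⟨hr, V, hV, hb⟩

theorem Fapp_le_of_subspace {A : E →L[ℂ] E} {L : Submodule ℂ E} {j : ℕ} {t r : ℝ} (hr : 0 ≤ r)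
    {V : Submodule ℂ E} (hVL : V ≤ L) (hV : Module.finrank ℂ V = j)
    (hb : ∀ u ∈ V, ‖A u - (t : ℂ) • u‖ ≤ r * ‖u‖) : Fapp A L j t ≤ r :=
  csInf_le ⟨0, fun _ hx => hx.1⟩ ⟨hr, V, hVL, hV, hb⟩

/-- Without a `k`-dimensional subspace the set defining `dd A k t` is empty and `dd A k t = 0`. -/
theorem dd_mono (A : E →L[ℂ] E) (t : ℝ) {j k : ℕ} (hjk : j ≤ k) {V : Submodule ℂ E}
    (hV : Module.finrank ℂ V = k) : dd A j t ≤ dd A k t := by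
  refine le_csInf ⟨‖A - (t : ℂ) • 1‖, norm_nonneg _, V, hV, fun u _ => ?_⟩ ?_
  · exact (A - (t : ℂ) • 1).le_opNorm u
  rintro r ⟨hr, W, hW, hb⟩
  obtain ⟨f, hf⟩ := exists_linearIndependent_of_le_finrank (hjk.trans hW.ge)
  refine dd_le_of_subspace hr (V := Submodule.span ℂ (Set.range (W.subtype ∘ f))) ?_ fun u hu => hb u ?_
  · rw [finrank_span_eq_card (hf.map' _ W.ker_subtype), Fintype.card_fin]
  · refine Submodule.span_le.mpr ?_ hu
    rintro _ ⟨i, rfl⟩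
    exact (f i).2

end MinMax

theorem stmt_14_general (A : H →L[ℂ] H) (hA : IsSelfAdjoint A)
    (L : Submodule ℂ H) (t : ℝ)
    (m : ℕ) (φ w : Fin m → H) (hφon : Orthonormal ℂ φ) (hwon : Orthonormal ℂ w)
    (hwL : ∀ j, w j ∈ L)
    (hφeig : ∀ j : Fin m,
      A (A (φ j) - (t : ℂ) • φ j) - (t : ℂ) • (A (φ j) - (t : ℂ) • φ j) =
        (((dd A (j.1 + 1) t : ℝ) : ℂ) ^ 2) • φ j)
    (εv : Fin m → ℝ)
    (hε : ∀ j, ‖A (w j - φ j) - (t : ℂ) • (w j - φ j)‖ ≤ εv j) :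
    ∀ j : Fin m, Fapp A L (j.1 + 1) t - dd A (j.1 + 1) t ≤
      Real.sqrt (∑ k ∈ Finset.univ.filter (fun k => k ≤ j), εv k ^ 2) := by
  intro j
  set T : H →ₗ[ℂ] H := (A : H →ₗ[ℂ] H) - (t : ℂ) • 1
  have hT : T.IsSymmetric := (ContinuousLinearMap.isSelfAdjoint_iff_isSymmetric.mp hA).sub
    (LinearMap.IsSymmetric.one.smul (Complex.conj_ofReal t))
  have hdim : ∀ v : Fin m → H, Orthonormal ℂ v →
      Module.finrank ℂ (Submodule.span ℂ (Set.range (v ∘ ((↑) : {k // k ≤ j} → Fin m)))) = j + 1 :=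
    fun v hv => by
      rw [finrank_span_eq_card (hv.comp _ Subtype.val_injective).linearIndependent,
        Fintype.card_subtype, Finset.filter_ge_eq_Iic, Fin.card_Iic]
  have hTφ (k : {k // k ≤ j}) : ‖T (φ k)‖ ≤ dd A (j + 1) t :=
    (hT.norm_apply_of_apply_apply_eq_sq_smul (hφon.norm_eq_one k) (dd_nonneg _ _ _)
      (hφeig k)).trans_le (dd_mono A t (Nat.succ_le_succ k.2) (hdim φ hφon))
  have horth : Pairwise fun k l : {k // k ≤ j} => ⟪T (φ k), T (φ l)⟫_ℂ = 0 := fun k l hkl => by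
    dsimp only
    rw [hT.inner_apply_apply_of_apply_apply_eq_smul _ (hφeig l),
      hφon.inner_eq_zero (Subtype.val_injective.ne hkl), mul_zero]
  rw [sub_le_iff_le_add', Finset.sum_subtype _ fun _ => Finset.mem_filter_univ _]
  refine Fapp_le_of_subspace (add_nonneg (dd_nonneg _ _ _) (Real.sqrt_nonneg _))
    (V := Submodule.span ℂ (Set.range (w ∘ ((↑) : {k // k ≤ j} → Fin m))))
    (Submodule.span_le.mpr (Set.range_subset_iff.mpr fun k => hwL k)) (hdim w hwon) fun u hu => ?_
  exact T.norm_apply_le_of_mem_span_perturbed (hwon.comp _ Subtype.val_injective)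
    horth (dd_nonneg _ _ _) hTφ (fun k => hε k) hu

/-- if `{w_j} ⊂ L` is orthonormal with
`‖(A-t)(w_j - φ_j)‖ ≤ ε_j` where `{φ_j}` are orthonormal eigenvectors of
`|A-t|` with `|A-t|φ_j = 𝔡_j(t) φ_j` (equivalently `(A-t)²φ_j = 𝔡_j(t)²φ_j`),
then `F_L^j(t) - 𝔡_j(t) ≤ (Σ_{k=1}^j ε_k²)^{1/2}`. -/
theorem stmt_14 (A : H →L[ℂ] H) (hA : IsSelfAdjoint A)
    (L : Submodule ℂ H) [FiniteDimensional ℂ L] (t : ℝ)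
    (m : ℕ) (φ w : Fin m → H) (hφon : Orthonormal ℂ φ) (hwon : Orthonormal ℂ w)
    (hwL : ∀ j, w j ∈ L)
    (hφeig : ∀ j : Fin m,
      A (A (φ j) - (t : ℂ) • φ j) - (t : ℂ) • (A (φ j) - (t : ℂ) • φ j) =
        (((dd A (j.1 + 1) t : ℝ) : ℂ) ^ 2) • φ j)
    (εv : Fin m → ℝ)
    (hε : ∀ j, ‖A (w j - φ j) - (t : ℂ) • (w j - φ j)‖ ≤ εv j) :
    ∀ j : Fin m, Fapp A L (j.1 + 1) t - dd A (j.1 + 1) t ≤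
      Real.sqrt (∑ k ∈ Finset.univ.filter (fun k => k ≤ j), εv k ^ 2) :=
  stmt_14_general A hA L t m φ w hφon hwon hwL hφeig εv hε
end
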